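/- Let n ≥ 1, let c : Fin n → ℝ, let y : Fin n → ℝ satisfy y_i ≥ 0 for all i and Σ_i y_i ≤ 1, set λ = 1 − Σ_i y_i, and let ε satisfy 2λ ≤ ε < 2. Let s be a permutation of Fin n with c_{s_1} ≤ ⋯ ≤ c_{s_n}, and define ỹ by ỹ_{s_n} = min(y_{s_n} + ε/2, 1) and, for 1 ≤ t < n, ỹ_{s_t} = max(0, y_{s_t} − max(0, (ε/2 − λ) − Σ_{j<t} y_{s_j})). Then ỹ is an optimal solution of the modified gradient redirection problem: ỹ_i ≥ 0 for all i, Σ_i ỹ_i = 1, Σ_i |ỹ_i − y_i| + λ ≤ ε, and Σ_i c_i w_i ≤ Σ_i c_i ỹ_i for every w with w_i ≥ 0, Σ_i w_i = 1, and Σ_i |w_i − y_i| + λ ≤ ε. -/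

import Mathlib

/-!
Read along `s`, the greedy vector removes the mass `ε/2 - λ` from the coordinates of smallest
value, from the front, and adds `ε/2` to the last one, so its prefix sums are
`max 0 (∑_{j<k} y_{s_j} - (ε/2 - λ))`. A feasible `w` gives up at most `ε/2 - λ` below `y`,
because `2 ∑ (y - w)⁺ = ‖w - y‖₁ + ∑ y - ∑ w`; hence its prefix sums dominate those of the
greedy vector, both total `1`, and Abel summation against the increasing `c ∘ s` gives
`⟨c, w⟩ ≤ ⟨c, ỹ⟩`.
-/

open Finset

theorem sum_range_mul_nonneg_of_prefix_nonpos {R : Type*} [CommRing R] [LinearOrder R]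
    [IsStrictOrderedRing R] {N : ℕ} {d u : ℕ → R} (hd : MonotoneOn d (Set.Iio N))
    (hu : ∀ k < N, ∑ j ∈ range k, u j ≤ 0) (hu_sum : ∑ j ∈ range N, u j = 0) :
    0 ≤ ∑ j ∈ range N, d j * u j := by
  simp_rw [← smul_eq_mul (a := d _)]
  rw [sum_range_by_parts, hu_sum, smul_zero, zero_sub, neg_nonneg]
  refine sum_nonpos fun i hi => ?_
  have hiN : i + 1 < N := by rw [mem_range] at hi; omega
  exact smul_nonpos_of_nonneg_of_nonpos
    (sub_nonneg.2 (hd (by simp; omega) (by simpa using hiN) (by omega))) (hu _ hiN)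

theorem two_mul_sum_max_zero_sub {ι : Type*} (s : Finset ι) (a w : ι → ℝ) :
    2 * ∑ j ∈ s, max 0 (a j - w j) = ∑ j ∈ s, |w j - a j| + (∑ j ∈ s, a j - ∑ j ∈ s, w j) := by
  rw [mul_sum, ← sum_sub_distrib, ← sum_add_distrib]
  refine sum_congr rfl fun j _ => ?_
  rw [abs_sub_comm, max_comm, ← posPart_def, abs_add_eq_two_nsmul_posPart, two_nsmul, two_mul]

/-- The entry `a k` after a total mass `D` has been removed from the front of `a`. -/
def greedyTrim (D : ℝ) (a : ℕ → ℝ) (k : ℕ) : ℝ :=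
  max 0 (a k - max 0 (D - ∑ j ∈ range k, a j))

theorem sum_range_greedyTrim {D : ℝ} {a : ℕ → ℝ} (hD : 0 ≤ D) (ha : ∀ k, 0 ≤ a k) (k : ℕ) :
    ∑ j ∈ range k, greedyTrim D a j = max 0 (∑ j ∈ range k, a j - D) := by
  induction k with
  | zero => simpa using hD
  | succ k ih =>
    rw [sum_range_succ, sum_range_succ, ih, greedyTrim]
    have := ha k
    rcases le_total (∑ j ∈ range k, a j) D with h | h
    · rw [max_eq_left (by linarith), max_eq_right (by linarith : 0 ≤ D - ∑ j ∈ range k, a j)]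
      rcases le_total (∑ j ∈ range k, a j + a k) D with h' | h'
      · rw [max_eq_left (by linarith), max_eq_left (by linarith)]; simp
      · rw [max_eq_right (by linarith), max_eq_right (by linarith)]; ring
    · rw [max_eq_right (by linarith), max_eq_left (by linarith : D - ∑ j ∈ range k, a j ≤ 0),
        max_eq_right (by linarith), max_eq_right (by linarith)]; ring

theorem greedyTrim_nonneg (D : ℝ) (a : ℕ → ℝ) (k : ℕ) : 0 ≤ greedyTrim D a k :=
  le_max_left _ _

theorem greedyTrim_le {D : ℝ} {a : ℕ → ℝ} {k : ℕ} (hk : 0 ≤ a k) : greedyTrim D a k ≤ a k :=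
  max_le hk (sub_le_self _ (le_max_left _ _))

theorem sum_range_greedyTrim_le {D : ℝ} {a W : ℕ → ℝ} (hD : 0 ≤ D) (ha : ∀ k, 0 ≤ a k)
    (hW : ∀ k, 0 ≤ W k) {k : ℕ} (hloss : ∑ j ∈ range k, (a j - W j) ≤ D) :
    ∑ j ∈ range k, greedyTrim D a j ≤ ∑ j ∈ range k, W j := by
  rw [sum_range_greedyTrim hD ha]
  rw [sum_sub_distrib] at hloss
  exact max_le (sum_nonneg fun j _ => hW j) (by linarith)

theorem sum_range_eq_max_of_eq_greedyTrim {m : ℕ} {D : ℝ} {a T : ℕ → ℝ} (hD : 0 ≤ D)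
    (ha : ∀ k, 0 ≤ a k) (hT : ∀ k < m, T k = greedyTrim D a k) :
    ∑ j ∈ range m, T j = max 0 (∑ j ∈ range m, a j - D) := by
  rw [← sum_range_greedyTrim hD ha]
  exact sum_congr rfl fun j hj => hT j (mem_range.1 hj)

section GreedyVector

variable {m : ℕ} {ε lam : ℝ} {a T : ℕ → ℝ}

theorem sum_range_succ_eq_one_of_eq_greedyTrim (hε : 2 * lam ≤ ε) (ha : ∀ k, 0 ≤ a k)
    (ha_sum : ∑ j ∈ range (m + 1), a j = 1 - lam)
    (hT : ∀ k < m, T k = greedyTrim (ε / 2 - lam) a k)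
    (hT_last : T m = min (a m + ε / 2) 1) :
    ∑ j ∈ range (m + 1), T j = 1 := by
  rw [sum_range_succ] at ha_sum ⊢
  rw [sum_range_eq_max_of_eq_greedyTrim (by linarith) ha hT, hT_last]
  rcases le_total (∑ j ∈ range m, a j) (ε / 2 - lam) with h | h
  · rw [max_eq_left (by linarith), min_eq_right (by linarith), zero_add]
  · rw [max_eq_right (by linarith), min_eq_left (by linarith)]
    linarith

theorem sum_range_succ_abs_sub_add_le_of_eq_greedyTrim (hε : 2 * lam ≤ ε) (hlam : 0 ≤ lam)
    (ha : ∀ k, 0 ≤ a k) (ha_sum : ∑ j ∈ range (m + 1), a j = 1 - lam)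
    (hT : ∀ k < m, T k = greedyTrim (ε / 2 - lam) a k) (hT_last : T m = min (a m + ε / 2) 1) :
    ∑ j ∈ range (m + 1), |T j - a j| + lam ≤ ε := by
  have h_front : ∑ j ∈ range m, |T j - a j| = ∑ j ∈ range m, a j - ∑ j ∈ range m, T j := by
    rw [← sum_sub_distrib]
    refine sum_congr rfl fun j hj => ?_
    rw [hT j (mem_range.1 hj), abs_sub_comm, abs_of_nonneg (sub_nonneg.2 (greedyTrim_le (ha j)))]
  have h_prefix := sum_range_eq_max_of_eq_greedyTrim (by linarith) ha hT
  have h_front_nonneg : 0 ≤ ∑ j ∈ range m, a j := sum_nonneg fun j _ => ha j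
  rw [sum_range_succ] at ha_sum ⊢
  rw [h_front, h_prefix, hT_last,
    abs_of_nonneg (sub_nonneg.2 (le_min (by linarith) (by linarith)))]
  rcases le_total (∑ j ∈ range m, a j) (ε / 2 - lam) with h | h
  · rw [max_eq_left (by linarith), min_eq_right (by linarith)]
    linarith
  · rw [max_eq_right (by linarith), min_eq_left (by linarith)]
    linarith

theorem sum_range_succ_mul_le_of_eq_greedyTrim (hε : 2 * lam ≤ ε) (ha : ∀ k, 0 ≤ a k)
    (ha_sum : ∑ j ∈ range (m + 1), a j = 1 - lam)
    (hT : ∀ k < m, T k = greedyTrim (ε / 2 - lam) a k)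
    (hT_last : T m = min (a m + ε / 2) 1) {d W : ℕ → ℝ}
    (hd : MonotoneOn d (Set.Iio (m + 1))) (hW : ∀ k, 0 ≤ W k)
    (hW_sum : ∑ j ∈ range (m + 1), W j = 1)
    (hW_budget : ∑ j ∈ range (m + 1), |W j - a j| + lam ≤ ε) :
    ∑ j ∈ range (m + 1), d j * W j ≤ ∑ j ∈ range (m + 1), d j * T j := by
  have h_loss : ∑ j ∈ range (m + 1), max 0 (a j - W j) ≤ ε / 2 - lam := by
    have := two_mul_sum_max_zero_sub (range (m + 1)) a W
    linarith
  have h_prefix : ∀ k < m + 1, ∑ j ∈ range k, (T j - W j) ≤ 0 := by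
    intro k hk
    rw [sum_sub_distrib, sub_nonpos, sum_congr rfl fun j hj => hT j (by simp at hj; omega)]
    refine sum_range_greedyTrim_le (by linarith) ha hW ?_
    calc ∑ j ∈ range k, (a j - W j) ≤ ∑ j ∈ range k, max 0 (a j - W j) :=
          sum_le_sum fun j _ => le_max_right _ _
      _ ≤ ∑ j ∈ range (m + 1), max 0 (a j - W j) :=
          sum_le_sum_of_subset_of_nonneg (range_subset_range.2 hk.le) fun _ _ _ =>
            le_max_left _ _
      _ ≤ ε / 2 - lam := h_loss
  have h_total : ∑ j ∈ range (m + 1), (T j - W j) = 0 := by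
    rw [sum_sub_distrib, sum_range_succ_eq_one_of_eq_greedyTrim hε ha ha_sum hT hT_last, hW_sum,
      sub_self]
  simpa only [mul_sub, sum_sub_distrib, sub_nonneg] using
    sum_range_mul_nonneg_of_prefix_nonpos hd h_prefix h_total

end GreedyVector

section SeqAlong

variable {n : ℕ} (s : Equiv.Perm (Fin n))

def seqAlong {α : Type*} [Zero α] (f : Fin n → α) (k : ℕ) : α :=
  if h : k < n then f (s ⟨k, h⟩) else 0

@[simp]
theorem seqAlong_val {α : Type*} [Zero α] (f : Fin n → α) (t : Fin n) :
    seqAlong s f t = f (s t) := by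
  simp [seqAlong]

theorem seqAlong_nonneg {α : Type*} [Zero α] [Preorder α] {f : Fin n → α} (hf : ∀ i, 0 ≤ f i)
    (k : ℕ) : 0 ≤ seqAlong s f k := by
  unfold seqAlong
  split_ifs
  exacts [hf _, le_rfl]

theorem sum_range_seqAlong {M : Type*} [AddCommMonoid M] (f : Fin n → M) :
    ∑ k ∈ range n, seqAlong s f k = ∑ i, f i := by
  rw [← Fin.sum_univ_eq_sum_range]
  simp only [seqAlong_val]
  exact Equiv.sum_comp s f

theorem sum_eq_sum_range_seqAlong₂ {α β M : Type*} [Zero α] [Zero β] [AddCommMonoid M]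
    (F : α → β → M) (hF : F 0 0 = 0) (f : Fin n → α) (g : Fin n → β) :
    ∑ i, F (f i) (g i) = ∑ k ∈ range n, F (seqAlong s f k) (seqAlong s g k) := by
  rw [← sum_range_seqAlong s]
  refine sum_congr rfl fun k _ => ?_
  unfold seqAlong
  split_ifs <;> simp [hF]

theorem sum_range_val_seqAlong {M : Type*} [AddCommMonoid M] (f : Fin n → M) (t : Fin n) :
    ∑ k ∈ range t, seqAlong s f k = ∑ j ∈ Iio t, f (s j) := by
  rw [← Nat.Iio_eq_range, ← Fin.map_valEmbedding_Iio, sum_map]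
  simp

theorem monotoneOn_seqAlong {α : Type*} [Zero α] [Preorder α] {f : Fin n → α}
    (hf : Monotone fun t => f (s t)) : MonotoneOn (seqAlong s f) (Set.Iio n) := by
  intro k hk l hl hkl
  simp only [Set.mem_Iio] at hk hl
  simpa [seqAlong, hk, hl] using hf (show (⟨k, hk⟩ : Fin n) ≤ ⟨l, hl⟩ from hkl)

end SeqAlong

/-- **Generalized (slack-λ) main theorem.** For the modified gradient
redirection problem with slack `λ = 1 - ∑ i, y i` and budget `2λ ≤ ε < 2`, the
greedy vector `ty` (with `ty (s last) = min (y (s last) + ε/2) 1` and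
`ty (s t) = max 0 (y (s t) - max 0 ((ε/2 - λ) - ∑_{j<t} y (s j)))` for
`t < last`) is feasible and optimal. -/
theorem greedy_gradient_redirection_optimal_slack
    (n : ℕ) (hn : 1 ≤ n) (c : Fin n → ℝ)
    (y : Fin n → ℝ) (hy0 : ∀ i, 0 ≤ y i) (hy1 : ∑ i, y i ≤ 1)
    (ε : ℝ) (hε0 : 2 * (1 - ∑ i, y i) ≤ ε)
    (s : Equiv.Perm (Fin n))
    (hs : Monotone (fun t => c (s t)))
    (ty : Fin n → ℝ)
    (hty_last : ty (s ⟨n - 1, by omega⟩) = min (y (s ⟨n - 1, by omega⟩) + ε / 2) 1)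
    (hty : ∀ t : Fin n, t ≠ ⟨n - 1, by omega⟩ →
      ty (s t) = max 0 (y (s t) -
        max 0 ((ε / 2 - (1 - ∑ i, y i)) - ∑ j ∈ Finset.Iio t, y (s j)))) :
    (∀ i, 0 ≤ ty i) ∧ (∑ i, ty i = 1) ∧
      ((∑ i, |ty i - y i|) + (1 - ∑ i, y i) ≤ ε) ∧
      (∀ w : Fin n → ℝ, (∀ i, 0 ≤ w i) → (∑ i, w i = 1) →
        (∑ i, |w i - y i|) + (1 - ∑ i, y i) ≤ ε →
        ∑ i, c i * w i ≤ ∑ i, c i * ty i) := by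
  obtain ⟨m, rfl⟩ : ∃ m, n = m + 1 := ⟨n - 1, by omega⟩
  set lam := 1 - ∑ i, y i
  have hlam : 0 ≤ lam := by linarith
  have ha := seqAlong_nonneg s hy0
  have ha_sum : ∑ j ∈ range (m + 1), seqAlong s y j = 1 - lam := by
    rw [sum_range_seqAlong]; ring
  have hT : ∀ k < m, seqAlong s ty k = greedyTrim (ε / 2 - lam) (seqAlong s y) k := by
    intro k hk
    have hk_ty := hty ⟨k, by omega⟩ (by simp; omega)
    rw [← sum_range_val_seqAlong] at hk_ty
    simpa [seqAlong, hk, greedyTrim, show k < m + 1 by omega] using hk_ty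
  have hT_last : seqAlong s ty m = min (seqAlong s y m + ε / 2) 1 := by
    simpa [seqAlong] using hty_last
  refine ⟨fun i => ?_, ?_, ?_, fun w hw0 hw_sum hw_budget => ?_⟩
  · obtain ⟨t, rfl⟩ := s.surjective i
    rw [← seqAlong_val s ty]
    rcases (Nat.lt_succ_iff.1 t.isLt).lt_or_eq with ht | ht
    · rw [hT t ht]; exact greedyTrim_nonneg _ _ _
    · rw [ht, hT_last]; exact le_min (by linarith [ha m]) zero_le_one
  · rw [← sum_range_seqAlong s]
    exact sum_range_succ_eq_one_of_eq_greedyTrim hε0 ha ha_sum hT hT_last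
  · rw [sum_eq_sum_range_seqAlong₂ s (fun u v => |u - v|) (by simp)]
    exact sum_range_succ_abs_sub_add_le_of_eq_greedyTrim hε0 hlam ha ha_sum hT hT_last
  · rw [sum_eq_sum_range_seqAlong₂ s (fun u v => |u - v|) (by simp)] at hw_budget
    rw [← sum_range_seqAlong s] at hw_sum
    rw [sum_eq_sum_range_seqAlong₂ s (· * ·) (mul_zero 0) c w,
      sum_eq_sum_range_seqAlong₂ s (· * ·) (mul_zero 0) c ty]
    exact sum_range_succ_mul_le_of_eq_greedyTrim hε0 ha ha_sum hT hT_last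
      (monotoneOn_seqAlong s hs) (seqAlong_nonneg s hw0) hw_sum hw_budget
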